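/- arXiv:1903.01880 — 2 statements merged into one kernel-verified Lean document; each statement's English description precedes it below -/
import Mathlib

section
/- Let |v| < 1 and let Q_v(x) = (√(1−v²) Re B(x), −√(1−v²) Im B(x), −v), where B is a finite Blaschke product of degree m ≥ 0 on the upper half-plane. Then the energy of Q_v equals E[Q_v] = (1 − v²) · m π, where E[u] = (1/(4π)) ∬_{ℝ×ℝ} |u(x) − u(y)|²/(x − y)² dx dy. In particular, for v = 0 every Blaschke product B of degree m satisfies (1/(4π)) ∬_{ℝ×ℝ} |B(x) − B(y)|²/(x − y)² dx dy = m π. -/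
/-!
Energy of the Blaschke traveling-wave profiles: `E[Q_v] = (1-v²)·mπ`, where
`E[u] = (1/4π) ∬ |u(x)-u(y)|²/(x-y)² dx dy`.
-/

open MeasureTheory Filter
open scoped ENNReal Topology

noncomputable section

section BlaschkeEnergyAux
open Complex Finset ComplexConjugate

lemma abs_sub_real_sq (p : ℂ) (y : ℝ) :
    (‖(y : ℂ) - p‖)^2 = (y - p.re)^2 + p.im^2 := by
  rw [Complex.sq_norm, Complex.normSq_apply]
  simp [Complex.sub_re, Complex.sub_im]
  ring

lemma integrable_cauchy_kernel (a b : ℝ) (hb : b ≠ 0) :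
    Integrable fun x : ℝ => ((x - a)^2 + b^2)⁻¹ := by
  have h2 : ∀ x : ℝ, ((x-a)^2 + b^2)⁻¹ = b⁻¹^2 * (1 + ((x-a)/b)^2)⁻¹ := by
    intro x; field_simp; ring
  simp_rw [h2]
  apply Integrable.const_mul
  have h3 : Integrable (fun x : ℝ => (1 + (x/b)^2)⁻¹) := integrable_inv_one_add_sq.comp_div hb
  exact h3.comp_sub_right a


lemma integral_cauchy_kernel (a b : ℝ) (hb : 0 < b) :
    ∫ x : ℝ, ((x - a)^2 + b^2)⁻¹ = Real.pi / b := by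
  have h1 : ∫ x : ℝ, ((x - a)^2 + b^2)⁻¹ = ∫ x : ℝ, (x^2 + b^2)⁻¹ := by
    simpa using integral_sub_right_eq_self (fun x : ℝ => (x^2 + b^2)⁻¹) a
  have h2 : ∀ x : ℝ, (x^2 + b^2)⁻¹ = b⁻¹^2 * (1 + (x/b)^2)⁻¹ := by
    intro x
    field_simp
    ring
  rw [h1]
  simp_rw [h2]
  rw [MeasureTheory.integral_const_mul, MeasureTheory.Measure.integral_comp_div
    (fun x : ℝ => (1 + x^2)⁻¹) b, integral_univ_inv_one_add_sq]
  rw [_root_.abs_of_pos hb, smul_eq_mul]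
  field_simp

lemma amgm_inv (A B : ℝ) (hA : 0 < A) (hB : 0 < B) :
    (A * B)⁻¹ ≤ 2⁻¹ * ((A^2)⁻¹ + (B^2)⁻¹) := by
  rw [inv_le_iff_one_le_mul₀ (by positivity)]
  have h1 : (A^2)⁻¹ + (B^2)⁻¹ = (A^2 + B^2) / (A^2 * B^2) := by field_simp; ring
  rw [h1, ← sub_nonneg]
  have h2 : 2⁻¹ * ((A ^ 2 + B ^ 2) / (A ^ 2 * B ^ 2)) * (A * B) - 1
      = (A - B)^2 / (2 * A * B) := by field_simp; ring
  rw [h2]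
  positivity

lemma norm_le_bound_uhp (G : ℂ → ℂ) (p q : ℂ) (hp : p.im < 0) (hq : q.im < 0)
    (hb : ∀ w : ℂ, 0 ≤ w.im → ‖G w‖ ≤ (‖w - p‖ * ‖w - q‖)⁻¹) (y : ℝ) :
    ‖G (y:ℂ)‖ ≤ 2⁻¹ * (((y - p.re)^2 + p.im^2)⁻¹ + ((y - q.re)^2 + q.im^2)⁻¹) := by
  have hyp : (y:ℂ) - p ≠ 0 := by
    intro h
    have := congrArg Complex.im h
    simp [Complex.sub_im] at this
    exact hp.ne this
  have hyq : (y:ℂ) - q ≠ 0 := by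
    intro h
    have := congrArg Complex.im h
    simp [Complex.sub_im] at this
    exact hq.ne this
  have hA : 0 < ‖(y:ℂ) - p‖ := norm_pos_iff.mpr hyp
  have hB : 0 < ‖(y:ℂ) - q‖ := norm_pos_iff.mpr hyq
  calc ‖G (y:ℂ)‖ ≤ (‖(y:ℂ) - p‖ * ‖(y:ℂ) - q‖)⁻¹ :=
        hb _ (by simp)
    _ ≤ 2⁻¹ * (((‖(y:ℂ) - p‖)^2)⁻¹ + ((‖(y:ℂ) - q‖)^2)⁻¹) :=
        amgm_inv _ _ hA hB
    _ = 2⁻¹ * (((y - p.re)^2 + p.im^2)⁻¹ + ((y - q.re)^2 + q.im^2)⁻¹) := by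
        rw [abs_sub_real_sq, abs_sub_real_sq]

lemma integrable_of_uhp_bound (G : ℂ → ℂ) (p q : ℂ) (hp : p.im < 0) (hq : q.im < 0)
    (hc : Continuous fun y : ℝ => G (y:ℂ))
    (hb : ∀ w : ℂ, 0 ≤ w.im → ‖G w‖ ≤ (‖w - p‖ * ‖w - q‖)⁻¹) :
    Integrable fun y : ℝ => G (y:ℂ) := by
  have hint : Integrable (fun y : ℝ =>
      2⁻¹ * (((y - p.re)^2 + p.im^2)⁻¹ + ((y - q.re)^2 + q.im^2)⁻¹)) :=
    ((integrable_cauchy_kernel p.re p.im hp.ne).add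
      (integrable_cauchy_kernel q.re q.im hq.ne)).const_mul _
  refine hint.mono hc.aestronglyMeasurable (ae_of_all _ fun y => ?_)
  have h := norm_le_bound_uhp G p q hp hq hb y
  calc ‖G (y:ℂ)‖ ≤ _ := h
    _ ≤ ‖2⁻¹ * (((y - p.re)^2 + p.im^2)⁻¹ + ((y - q.re)^2 + q.im^2)⁻¹)‖ :=
        le_abs_self _

lemma integral_uhp_eq_zero (G : ℂ → ℂ) (p q : ℂ) (hp : p.im < 0) (hq : q.im < 0)
    (hd : ∀ w : ℂ, 0 ≤ w.im → DifferentiableAt ℂ G w)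
    (hb : ∀ w : ℂ, 0 ≤ w.im → ‖G w‖ ≤ (‖w - p‖ * ‖w - q‖)⁻¹) :
    ∫ y : ℝ, G (y : ℂ) = 0 := by
  have hc : Continuous fun y : ℝ => G (y:ℂ) := by
    rw [continuous_iff_continuousAt]
    intro y
    exact ((hd y (by simp)).continuousAt).comp Complex.continuous_ofReal.continuousAt
  have hint : Integrable fun y : ℝ => G (y:ℂ) := integrable_of_uhp_bound G p q hp hq hc hb
  set C : ℝ := max 1 (2 * (‖p‖ + ‖q‖) + 1) with hC
  have key : ∀ R : ℝ, C ≤ R → ‖∫ y in (-R)..R, G (y:ℂ)‖ ≤ 16 / R := by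
    intro R hR
    have hR1 : 1 ≤ R := le_trans (le_max_left _ _) hR
    have hR0 : 0 < R := lt_of_lt_of_le one_pos hR1
    have hpq : 2 * (‖p‖ + ‖q‖) + 1 ≤ R := le_trans (le_max_right _ _) hR
    have hpR : ‖p‖ ≤ R / 2 - 1/2 := by
      have h0 : 0 ≤ ‖q‖ := norm_nonneg q
      linarith
    have hqR : ‖q‖ ≤ R / 2 - 1/2 := by
      have h0 : 0 ≤ ‖p‖ := norm_nonneg p
      linarith
    -- uniform bound on the far part of the closed upper half-plane
    have hfar : ∀ w : ℂ, 0 ≤ w.im → R ≤ ‖w‖ → ‖G w‖ ≤ 4 / R^2 := by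
      intro w hw hwR
      have h1 : R / 2 ≤ ‖w - p‖ := by
        have h3 := norm_sub_norm_le w p
        linarith
      have h2 : R / 2 ≤ ‖w - q‖ := by
        have h3 := norm_sub_norm_le w q
        linarith
      calc ‖G w‖ ≤ (‖w - p‖ * ‖w - q‖)⁻¹ := hb w hw
        _ ≤ (R/2 * (R/2))⁻¹ := by
            apply inv_anti₀ (by positivity)
            exact mul_le_mul h1 h2 (by positivity) (norm_nonneg _)
        _ = 4 / R^2 := by field_simp; ring
    -- the rectangle
    have hdiff : DifferentiableOn ℂ G
        (Set.uIcc (⟨-R, 0⟩ : ℂ).re (⟨R, R⟩ : ℂ).re ×ℂ Set.uIcc (⟨-R, 0⟩ : ℂ).im (⟨R, R⟩ : ℂ).im) := by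
      intro w hw
      rw [Complex.mem_reProdIm] at hw
      have hw2 : w.im ∈ Set.uIcc (0:ℝ) R := hw.2
      rw [Set.uIcc_of_le hR0.le] at hw2
      exact (hd w hw2.1).differentiableWithinAt
    have rect := Complex.integral_boundary_rect_eq_zero_of_differentiableOn G
      (⟨-R, 0⟩ : ℂ) (⟨R, R⟩ : ℂ) hdiff
    simp only [Complex.ofReal_zero, zero_mul, add_zero] at rect
    -- rect : (∫ x in -R..R, G x) - (∫ x in -R..R, G (x + R*I))
    --   + I•(∫ y in 0..R, G (R + y*I)) - I•(∫ y in 0..R, G (-R + y*I)) = 0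
    have hA : (∫ x in (-R)..R, G (x:ℂ))
        = (∫ x in (-R)..R, G ((x:ℂ) + (R:ℂ) * I))
          - I • (∫ y in (0:ℝ)..R, G ((R:ℂ) + (y:ℂ) * I))
          + I • (∫ y in (0:ℝ)..R, G (((-R : ℝ):ℂ) + (y:ℂ) * I)) := by
      linear_combination rect
    have hB : ‖∫ x in (-R)..R, G ((x:ℂ) + (R:ℂ) * I)‖ ≤ 4/R^2 * |R - (-R)| := by
      apply intervalIntegral.norm_integral_le_of_norm_le_const
      intro x _
      apply hfar
      · simp [hR0.le]
      · have h := Complex.abs_im_le_norm ((x:ℂ) + (R:ℂ) * I)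
        simp at h
        rw [_root_.abs_of_nonneg hR0.le] at h
        exact h
    have hCside : ∀ s : ℝ, |s| = R → ‖∫ y in (0:ℝ)..R, G ((s:ℂ) + (y:ℂ) * I)‖
        ≤ 4/R^2 * |R - 0| := by
      intro s hs
      apply intervalIntegral.norm_integral_le_of_norm_le_const
      intro y hy
      rw [Set.uIoc_of_le hR0.le] at hy
      apply hfar
      · simp [hy.1.le]
      · have h := Complex.abs_re_le_norm ((s:ℂ) + (y:ℂ) * I)
        simp only [Complex.add_re, Complex.ofReal_re, Complex.mul_re, Complex.I_re,
          Complex.ofReal_im, Complex.I_im] at h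
        simp at h
        rw [← hs]
        exact h
    have hC := hCside R (_root_.abs_of_pos hR0)
    have hD := hCside (-R) (by rw [abs_neg, _root_.abs_of_pos hR0])
    rw [hA]
    have habs : |R - (-R)| = 2 * R := by
      rw [_root_.abs_of_nonneg (by linarith)]; ring
    have habs0 : |R - (0:ℝ)| = R := by
      rw [_root_.abs_of_nonneg (by linarith)]; ring_nf
    rw [habs] at hB
    rw [habs0] at hC hD
    calc ‖(∫ x in (-R)..R, G ((x:ℂ) + (R:ℂ) * I))
          - I • (∫ y in (0:ℝ)..R, G ((R:ℂ) + (y:ℂ) * I))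
          + I • (∫ y in (0:ℝ)..R, G (((-R : ℝ):ℂ) + (y:ℂ) * I))‖
        ≤ ‖(∫ x in (-R)..R, G ((x:ℂ) + (R:ℂ) * I))
          - I • (∫ y in (0:ℝ)..R, G ((R:ℂ) + (y:ℂ) * I))‖
          + ‖I • (∫ y in (0:ℝ)..R, G (((-R : ℝ):ℂ) + (y:ℂ) * I))‖ := norm_add_le _ _
      _ ≤ ‖(∫ x in (-R)..R, G ((x:ℂ) + (R:ℂ) * I))‖
          + ‖I • (∫ y in (0:ℝ)..R, G ((R:ℂ) + (y:ℂ) * I))‖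
          + ‖I • (∫ y in (0:ℝ)..R, G (((-R : ℝ):ℂ) + (y:ℂ) * I))‖ := by
            have := norm_sub_le (∫ x in (-R)..R, G ((x:ℂ) + (R:ℂ) * I))
              (I • (∫ y in (0:ℝ)..R, G ((R:ℂ) + (y:ℂ) * I)))
            linarith
      _ ≤ 4/R^2 * (2*R) + 4/R^2 * R + 4/R^2 * R := by
            rw [norm_smul, norm_smul, Complex.norm_I, one_mul, one_mul]
            gcongr
      _ = 16 / R := by field_simp; ring
  have T1 : Tendsto (fun R : ℝ => ∫ y in (-R)..R, G (y:ℂ)) atTop (𝓝 (∫ y : ℝ, G (y:ℂ))) :=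
    intervalIntegral_tendsto_integral hint tendsto_neg_atTop_atBot tendsto_id
  have T2 : Tendsto (fun R : ℝ => ∫ y in (-R)..R, G (y:ℂ)) atTop (𝓝 0) := by
    apply squeeze_zero_norm' ((eventually_ge_atTop C).mono key)
    exact tendsto_const_nhds.div_atTop tendsto_id
  exact tendsto_nhds_unique T1 T2

section Blaschke
variable (ζ : ℕ → ℂ) (m : ℕ)

def bl (k : ℕ) (w : ℂ) : ℂ := (w - ζ k) / (w - conj (ζ k))
def Pp (k : ℕ) (w : ℂ) : ℂ := ∏ l ∈ Finset.range k, bl ζ l w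
def Qq (k : ℕ) (w : ℂ) : ℂ := ∏ l ∈ Finset.Ico (k+1) m, bl ζ l w
def dd (k : ℕ) (y : ℝ) : ℂ := Qq ζ m k (y:ℂ) / ((y:ℂ) - conj (ζ k))
def cc (k : ℕ) (x : ℝ) : ℂ := (ζ k - conj (ζ k)) * Pp ζ k (x:ℂ) / ((x:ℂ) - conj (ζ k))
def SS (x y : ℝ) : ℂ := ∑ k ∈ Finset.range m, cc ζ k x * dd ζ m k y
def HH (x : ℝ) : ℝ :=
  ∑ k ∈ Finset.range m, 4 * Real.pi * (ζ k).im / ((x - (ζ k).re)^2 + (ζ k).im^2)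

variable {ζ} {m}

lemma sub_conj_ne (hζ : ∀ k, 0 < (ζ k).im) (k : ℕ) {w : ℂ} (hw : 0 ≤ w.im) :
    w - conj (ζ k) ≠ 0 := by
  intro h
  have h1 := congrArg Complex.im h
  rw [Complex.sub_im, Complex.conj_im] at h1
  simp at h1
  have := hζ k; linarith

lemma real_sub_conj_ne (hζ : ∀ k, 0 < (ζ k).im) (k : ℕ) (y : ℝ) :
    (y:ℂ) - conj (ζ k) ≠ 0 := sub_conj_ne hζ k (by simp)

lemma real_sub_ne (hζ : ∀ k, 0 < (ζ k).im) (k : ℕ) (y : ℝ) : (y:ℂ) - ζ k ≠ 0 := by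
  intro h
  have h1 := congrArg Complex.im h
  simp at h1
  have := hζ k; linarith

lemma conj_real_sub (k : ℕ) (y : ℝ) : conj ((y:ℂ) - ζ k) = (y:ℂ) - conj (ζ k) := by
  rw [map_sub, Complex.conj_ofReal]

lemma abs_bl_real (hζ : ∀ k, 0 < (ζ k).im) (k : ℕ) (y : ℝ) :
    ‖bl ζ k (y:ℂ)‖ = 1 := by
  rw [bl, norm_div, ← conj_real_sub, Complex.norm_conj, div_self]
  exact norm_ne_zero_iff.mpr (real_sub_ne hζ k y)

lemma abs_Pp_real (hζ : ∀ k, 0 < (ζ k).im) (k : ℕ) (y : ℝ) :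
    ‖Pp ζ k (y:ℂ)‖ = 1 := by
  rw [Pp, norm_prod]
  exact Finset.prod_eq_one fun l _ => abs_bl_real hζ l y

lemma abs_Qq_real (hζ : ∀ k, 0 < (ζ k).im) (k : ℕ) (y : ℝ) :
    ‖Qq ζ m k (y:ℂ)‖ = 1 := by
  rw [Qq, norm_prod]
  exact Finset.prod_eq_one fun l _ => abs_bl_real hζ l y

lemma abs_bl_le_one (hζ : ∀ k, 0 < (ζ k).im) (k : ℕ) {w : ℂ} (hw : 0 ≤ w.im) :
    ‖bl ζ k w‖ ≤ 1 := by
  rw [bl, norm_div, div_le_one (norm_pos_iff.mpr (sub_conj_ne hζ k hw))]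
  have h : ‖w - ζ k‖ ^ 2 ≤ ‖w - conj (ζ k)‖ ^ 2 := by
    rw [Complex.sq_norm, Complex.sq_norm, Complex.normSq_apply, Complex.normSq_apply]
    simp only [Complex.sub_re, Complex.sub_im, Complex.conj_re, Complex.conj_im]
    nlinarith [hζ k, hw]
  nlinarith [norm_nonneg (w - ζ k), norm_nonneg (w - conj (ζ k))]

lemma bl_diff (hζ : ∀ k, 0 < (ζ k).im) (k : ℕ) {w : ℂ} (hw : 0 ≤ w.im) :
    DifferentiableAt ℂ (bl ζ k) w := by
  apply DifferentiableAt.div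
  · fun_prop
  · fun_prop
  · exact sub_conj_ne hζ k hw

lemma prod_sub_prod (n : ℕ) (a b : ℕ → ℂ) :
    (∏ k ∈ Finset.range n, a k) - ∏ k ∈ Finset.range n, b k
      = ∑ k ∈ Finset.range n,
          (∏ l ∈ Finset.range k, a l) * (a k - b k) * ∏ l ∈ Finset.Ico (k+1) n, b l := by
  induction n with
  | zero => simp
  | succ n ih =>
    rw [Finset.prod_range_succ, Finset.prod_range_succ, Finset.sum_range_succ]
    have h1 : ∀ k ∈ Finset.range n,
        (∏ l ∈ Finset.range k, a l) * (a k - b k) * ∏ l ∈ Finset.Ico (k+1) (n+1), b l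
          = ((∏ l ∈ Finset.range k, a l) * (a k - b k) * ∏ l ∈ Finset.Ico (k+1) n, b l) * b n := by
      intro k hk
      rw [Finset.prod_Ico_succ_top (by simpa using Finset.mem_range.1 hk), ← mul_assoc]
    rw [Finset.sum_congr rfl h1, ← Finset.sum_mul, ← ih]
    simp [Finset.Ico_self]
    ring

lemma bl_sub_bl (hζ : ∀ k, 0 < (ζ k).im) (k : ℕ) (x y : ℝ) :
    bl ζ k (x:ℂ) - bl ζ k (y:ℂ)
      = (ζ k - conj (ζ k)) * ((x:ℂ) - (y:ℂ))
          / (((x:ℂ) - conj (ζ k)) * ((y:ℂ) - conj (ζ k))) := by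
  rw [bl, bl]
  field_simp [real_sub_conj_ne hζ k x, real_sub_conj_ne hζ k y]
  ring

lemma blaschke_sub (hζ : ∀ k, 0 < (ζ k).im) (x y : ℝ) :
    (∏ k ∈ Finset.range m, bl ζ k (x:ℂ)) - ∏ k ∈ Finset.range m, bl ζ k (y:ℂ)
      = ((x:ℂ) - (y:ℂ)) * SS ζ m x y := by
  rw [prod_sub_prod, SS, Finset.mul_sum]
  refine Finset.sum_congr rfl fun k hk => ?_
  rw [bl_sub_bl hζ, cc, dd, Pp, Qq]
  field_simp [real_sub_conj_ne hζ k x, real_sub_conj_ne hζ k y]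

end Blaschke
section Blaschke2
variable {ζ : ℕ → ℂ} {m : ℕ}

lemma conj_im_neg (hζ : ∀ k, 0 < (ζ k).im) (k : ℕ) : (conj (ζ k)).im < 0 := by
  rw [Complex.conj_im]; have := hζ k; linarith

lemma normSq_real_sub_conj (k : ℕ) (y : ℝ) :
    Complex.normSq ((y:ℂ) - conj (ζ k)) = (y - (ζ k).re)^2 + (ζ k).im^2 := by
  rw [← Complex.sq_norm, abs_sub_real_sq]
  simp [Complex.conj_re, Complex.conj_im]

lemma abs_dd (hζ : ∀ k, 0 < (ζ k).im) (k : ℕ) (y : ℝ) :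
    ‖dd ζ m k y‖ = (‖(y:ℂ) - conj (ζ k)‖)⁻¹ := by
  rw [dd, norm_div, abs_Qq_real hζ, one_div]

lemma continuous_dd_mul (hζ : ∀ k, 0 < (ζ k).im) (j k : ℕ) :
    Continuous fun y : ℝ => dd ζ m j y * conj (dd ζ m k y) := by
  have hdd : ∀ i : ℕ, Continuous fun y : ℝ => dd ζ m i y := by
    intro i
    apply Continuous.div
    · apply continuous_finset_prod
      intro l _
      apply Continuous.div
      · fun_prop
      · fun_prop
      · exact fun y => real_sub_conj_ne hζ l y
    · fun_prop
    · exact fun y => real_sub_conj_ne hζ i y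
  exact (hdd j).mul (Complex.continuous_conj.comp (hdd k))

lemma norm_dd_mul (hζ : ∀ k, 0 < (ζ k).im) (j k : ℕ) (y : ℝ) :
    ‖dd ζ m j y * conj (dd ζ m k y)‖
      = (‖(y:ℂ) - conj (ζ j)‖ * ‖(y:ℂ) - conj (ζ k)‖)⁻¹ := by
  rw [norm_mul, Complex.norm_conj, abs_dd hζ, abs_dd hζ, mul_inv]

lemma integrable_dd_mul (hζ : ∀ k, 0 < (ζ k).im) (j k : ℕ) :
    Integrable fun y : ℝ => dd ζ m j y * conj (dd ζ m k y) := by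
  have hint : Integrable (fun y : ℝ =>
      2⁻¹ * (((y - (ζ j).re)^2 + (ζ j).im^2)⁻¹ + ((y - (ζ k).re)^2 + (ζ k).im^2)⁻¹)) :=
    ((integrable_cauchy_kernel (ζ j).re (ζ j).im (hζ j).ne').add
      (integrable_cauchy_kernel (ζ k).re (ζ k).im (hζ k).ne')).const_mul _
  refine hint.mono (continuous_dd_mul hζ j k).aestronglyMeasurable (ae_of_all _ fun y => ?_)
  rw [norm_dd_mul hζ]
  have hA : 0 < ‖(y:ℂ) - conj (ζ j)‖ :=
    norm_pos_iff.mpr (real_sub_conj_ne hζ j y)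
  have hB : 0 < ‖(y:ℂ) - conj (ζ k)‖ :=
    norm_pos_iff.mpr (real_sub_conj_ne hζ k y)
  calc (‖(y:ℂ) - conj (ζ j)‖ * ‖(y:ℂ) - conj (ζ k)‖)⁻¹
      ≤ 2⁻¹ * (((‖(y:ℂ) - conj (ζ j)‖)^2)⁻¹
          + ((‖(y:ℂ) - conj (ζ k)‖)^2)⁻¹) := amgm_inv _ _ hA hB
    _ = 2⁻¹ * (((y - (ζ j).re)^2 + (ζ j).im^2)⁻¹ + ((y - (ζ k).re)^2 + (ζ k).im^2)⁻¹) := by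
        rw [Complex.sq_norm, Complex.sq_norm, normSq_real_sub_conj, normSq_real_sub_conj]
    _ ≤ ‖2⁻¹ * (((y - (ζ j).re)^2 + (ζ j).im^2)⁻¹ + ((y - (ζ k).re)^2 + (ζ k).im^2)⁻¹)‖ :=
        le_abs_self _

lemma JJ_diag (hζ : ∀ k, 0 < (ζ k).im) (k : ℕ) :
    (∫ y : ℝ, dd ζ m k y * conj (dd ζ m k y))
      = ((Real.pi / (ζ k).im : ℝ) : ℂ) := by
  have h1 : ∀ y : ℝ, dd ζ m k y * conj (dd ζ m k y)
      = ((((y - (ζ k).re)^2 + (ζ k).im^2)⁻¹ : ℝ) : ℂ) := by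
    intro y
    rw [Complex.mul_conj]
    congr 1
    rw [dd, map_div₀, Complex.normSq_eq_norm_sq, abs_Qq_real hζ, normSq_real_sub_conj]
    norm_num
  simp_rw [h1]
  rw [← integral_cauchy_kernel (ζ k).re (ζ k).im (hζ k)]
  exact integral_ofReal

lemma JJ_offdiag_lt (hζ : ∀ k, 0 < (ζ k).im) {j k : ℕ} (hjk : j < k) (hk : k < m) :
    (∫ y : ℝ, dd ζ m j y * conj (dd ζ m k y)) = 0 := by
  set R : ℂ → ℂ := fun w =>
    (∏ l ∈ Finset.Ioo j k, bl ζ l w) / ((w - conj (ζ j)) * (w - conj (ζ k))) with hR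
  have hpt : ∀ y : ℝ, dd ζ m j y * conj (dd ζ m k y) = R (y:ℂ) := by
    intro y
    have e1 : conj (dd ζ m k y) = conj (Qq ζ m k (y:ℂ)) / ((y:ℂ) - ζ k) := by
      rw [dd, map_div₀, map_sub, Complex.conj_ofReal, Complex.conj_conj]
    have key1 : Qq ζ m j (y:ℂ)
        = (∏ l ∈ Finset.Ico (j+1) (k+1), bl ζ l (y:ℂ)) * Qq ζ m k (y:ℂ) := by
      rw [Qq, Qq, Finset.prod_Ico_consecutive _ (Nat.succ_le_succ hjk.le) (Nat.succ_le_of_lt hk)]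
    have key2 : Qq ζ m k (y:ℂ) * conj (Qq ζ m k (y:ℂ)) = 1 := by
      rw [Complex.mul_conj, Complex.normSq_eq_norm_sq, abs_Qq_real hζ]
      norm_num
    have key3 : (∏ l ∈ Finset.Ico (j+1) (k+1), bl ζ l (y:ℂ))
        = (∏ l ∈ Finset.Ioo j k, bl ζ l (y:ℂ)) * bl ζ k (y:ℂ) := by
      rw [Finset.prod_Ico_succ_top (Nat.succ_le_of_lt hjk), Nat.succ_eq_add_one, Finset.Ico_add_one_left_eq_Ioo]
    calc dd ζ m j y * conj (dd ζ m k y)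
        = ((∏ l ∈ Finset.Ioo j k, bl ζ l (y:ℂ)) * bl ζ k (y:ℂ)
            * (Qq ζ m k (y:ℂ) * conj (Qq ζ m k (y:ℂ))))
            / (((y:ℂ) - conj (ζ j)) * ((y:ℂ) - ζ k)) := by
          rw [dd, e1, key1, key3]
          field_simp
      _ = ((∏ l ∈ Finset.Ioo j k, bl ζ l (y:ℂ)) * bl ζ k (y:ℂ))
            / (((y:ℂ) - conj (ζ j)) * ((y:ℂ) - ζ k)) := by
          rw [key2, mul_one]
      _ = R (y:ℂ) := by
          rw [hR, bl]
          field_simp [real_sub_conj_ne hζ j y, real_sub_conj_ne hζ k y, real_sub_ne hζ k y]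
  simp_rw [hpt]
  apply integral_uhp_eq_zero R (conj (ζ j)) (conj (ζ k)) (conj_im_neg hζ j) (conj_im_neg hζ k)
  · intro w hw
    apply DifferentiableAt.div
    · apply DifferentiableAt.fun_finsetProd
      intro l _
      exact bl_diff hζ l hw
    · fun_prop
    · exact mul_ne_zero (sub_conj_ne hζ j hw) (sub_conj_ne hζ k hw)
  · intro w hw
    rw [hR]
    simp only [norm_div, norm_mul]
    rw [div_eq_mul_inv]
    have h1 : ‖∏ l ∈ Finset.Ioo j k, bl ζ l w‖ ≤ 1 := by
      rw [norm_prod]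
      exact Finset.prod_le_one (fun l _ => norm_nonneg _)
        (fun l _ => abs_bl_le_one hζ l hw)
    exact mul_le_of_le_one_left (by positivity) h1

lemma JJ_offdiag (hζ : ∀ k, 0 < (ζ k).im) {j k : ℕ} (hj : j < m) (hk : k < m) (hne : j ≠ k) :
    (∫ y : ℝ, dd ζ m j y * conj (dd ζ m k y)) = 0 := by
  rcases lt_or_gt_of_ne hne with h | h
  · exact JJ_offdiag_lt hζ h hk
  · have h0 := JJ_offdiag_lt hζ h hj
    have h1 : (∫ y : ℝ, dd ζ m j y * conj (dd ζ m k y))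
        = conj (∫ y : ℝ, dd ζ m k y * conj (dd ζ m j y)) := by
      rw [← integral_conj]
      congr 1
      funext y
      rw [map_mul, Complex.conj_conj, mul_comm]
    rw [h1, h0, map_zero]

lemma normSq_SS (x y : ℝ) :
    Complex.normSq (SS ζ m x y)
      = ∑ j ∈ Finset.range m, ∑ k ∈ Finset.range m,
          ((cc ζ j x * conj (cc ζ k x)) * (dd ζ m j y * conj (dd ζ m k y))).re := by
  have h0 : ∀ z : ℂ, Complex.normSq z = (z * conj z).re := by
    intro z; rw [Complex.mul_conj]; simp
  rw [h0, SS, map_sum, Finset.sum_mul_sum, Complex.re_sum]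
  refine Finset.sum_congr rfl fun j _ => ?_
  rw [Complex.re_sum]
  refine Finset.sum_congr rfl fun k _ => ?_
  congr 1
  rw [map_mul]
  ring

lemma integrable_term (hζ : ∀ k, 0 < (ζ k).im) (x : ℝ) (j k : ℕ) :
    Integrable fun y : ℝ =>
      ((cc ζ j x * conj (cc ζ k x)) * (dd ζ m j y * conj (dd ζ m k y))).re := by
  have h := ((integrable_dd_mul (m := m) hζ j k).const_mul (cc ζ j x * conj (cc ζ k x))).re
  simpa using h

lemma integrable_normSq_SS (hζ : ∀ k, 0 < (ζ k).im) (x : ℝ) :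
    Integrable fun y : ℝ => Complex.normSq (SS ζ m x y) := by
  have h : (fun y : ℝ => Complex.normSq (SS ζ m x y))
      = fun y : ℝ => ∑ j ∈ Finset.range m, ∑ k ∈ Finset.range m,
          ((cc ζ j x * conj (cc ζ k x)) * (dd ζ m j y * conj (dd ζ m k y))).re := by
    funext y; exact normSq_SS x y
  rw [h]
  exact integrable_finset_sum _ fun j _ => integrable_finset_sum _ fun k _ =>
    integrable_term hζ x j k

lemma normSq_cc (hζ : ∀ k, 0 < (ζ k).im) (k : ℕ) (x : ℝ) :
    Complex.normSq (cc ζ k x)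
      = 4 * (ζ k).im^2 / ((x - (ζ k).re)^2 + (ζ k).im^2) := by
  rw [cc, Complex.normSq_div, Complex.normSq_mul, normSq_real_sub_conj]
  congr 1
  rw [Complex.sub_conj]
  have h1 : Complex.normSq ((2 * (ζ k).im : ℝ) * Complex.I) = 4 * (ζ k).im^2 := by
    rw [Complex.normSq_mul, Complex.normSq_I, Complex.normSq_ofReal]
    ring
  rw [h1, Complex.normSq_eq_norm_sq, abs_Pp_real hζ]
  norm_num

lemma integral_normSq_SS (hζ : ∀ k, 0 < (ζ k).im) (x : ℝ) :
    ∫ y : ℝ, Complex.normSq (SS ζ m x y) = HH ζ m x := by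
  have h : (fun y : ℝ => Complex.normSq (SS ζ m x y))
      = fun y : ℝ => ∑ j ∈ Finset.range m, ∑ k ∈ Finset.range m,
          ((cc ζ j x * conj (cc ζ k x)) * (dd ζ m j y * conj (dd ζ m k y))).re := by
    funext y; exact normSq_SS x y
  rw [h, integral_finset_sum _ (fun j _ => integrable_finset_sum _ fun k _ =>
    integrable_term hζ x j k)]
  rw [HH]
  refine Finset.sum_congr rfl fun j hj => ?_
  rw [integral_finset_sum _ (fun k _ => integrable_term hζ x j k)]
  have hterm : ∀ k : ℕ, (∫ y : ℝ, ((cc ζ j x * conj (cc ζ k x))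
        * (dd ζ m j y * conj (dd ζ m k y))).re)
      = ((cc ζ j x * conj (cc ζ k x)) * ∫ y : ℝ, dd ζ m j y * conj (dd ζ m k y)).re := by
    intro k
    have h2 := Complex.reCLM.integral_comp_comm
      ((integrable_dd_mul (m := m) hζ j k).const_mul (cc ζ j x * conj (cc ζ k x)))
    simp only [Complex.reCLM_apply] at h2
    rw [h2, MeasureTheory.integral_const_mul]
  have hdiag : (∫ y : ℝ, dd ζ m j y * conj (dd ζ m j y)) = ((Real.pi / (ζ j).im : ℝ) : ℂ) :=
    JJ_diag hζ j
  rw [Finset.sum_eq_single_of_mem j hj]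
  · rw [hterm j, hdiag, Complex.mul_conj, ← Complex.ofReal_mul, Complex.ofReal_re,
      normSq_cc hζ]
    have hb := hζ j
    have hD : 0 < (x - (ζ j).re)^2 + (ζ j).im^2 := by positivity
    field_simp
  · intro k hk hne
    rw [hterm k, JJ_offdiag hζ (Finset.mem_range.1 hj) (Finset.mem_range.1 hk) hne.symm]
    simp

lemma integrable_HH (hζ : ∀ k, 0 < (ζ k).im) : Integrable (HH ζ m) := by
  apply integrable_finset_sum
  intro k _
  have h := (integrable_cauchy_kernel (ζ k).re (ζ k).im (hζ k).ne').const_mul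
    (4 * Real.pi * (ζ k).im)
  simpa [div_eq_mul_inv] using h

lemma integral_HH (hζ : ∀ k, 0 < (ζ k).im) :
    ∫ x : ℝ, HH ζ m x = m * (4 * Real.pi^2) := by
  have hint : ∀ k ∈ Finset.range m, Integrable (fun x : ℝ =>
      4 * Real.pi * (ζ k).im / ((x - (ζ k).re)^2 + (ζ k).im^2)) := by
    intro k _
    have h := (integrable_cauchy_kernel (ζ k).re (ζ k).im (hζ k).ne').const_mul
      (4 * Real.pi * (ζ k).im)
    simpa [div_eq_mul_inv] using h
  simp only [HH]
  rw [integral_finset_sum _ hint]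
  have hval : ∀ k ∈ Finset.range m, (∫ x : ℝ,
      4 * Real.pi * (ζ k).im / ((x - (ζ k).re)^2 + (ζ k).im^2)) = 4 * Real.pi^2 := by
    intro k _
    simp_rw [div_eq_mul_inv]
    rw [MeasureTheory.integral_const_mul, integral_cauchy_kernel _ _ (hζ k)]
    have := (hζ k).ne'
    field_simp
  rw [Finset.sum_congr rfl hval, Finset.sum_const, Finset.card_range, nsmul_eq_mul]

lemma HH_nonneg (hζ : ∀ k, 0 < (ζ k).im) (x : ℝ) : 0 ≤ HH ζ m x := by
  apply Finset.sum_nonneg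
  intro k _
  have h1 := hζ k
  have h2 := Real.pi_pos
  positivity

end Blaschke2

end BlaschkeEnergyAux

/-- Vectors in ℝ³. -/
abbrev V3 : Type := Fin 3 → ℝ

/-- Finite Blaschke product on the upper half-plane with zeros `z k`. -/
def blaschke {m : ℕ} (z : Fin m → ℂ) (w : ℂ) : ℂ :=
  ∏ k, (w - z k) / (w - (starRingEnd ℂ) (z k))

/-- The profile `x ↦ (√(1-v²) Re B(x), −√(1-v²) Im B(x), −v)` built from the
boundary values of the Blaschke product with zeros `z`. -/
def blaschkeProfile (v : ℝ) {m : ℕ} (z : Fin m → ℂ) (x : ℝ) : V3 :=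
  ![Real.sqrt (1 - v ^ 2) * (blaschke z (x : ℂ)).re,
    -(Real.sqrt (1 - v ^ 2) * (blaschke z (x : ℂ)).im),
    -v]

/-- **Energy of Blaschke traveling-wave profiles.**  For `|v| < 1` and a Blaschke
product `B` of degree `m` with zeros in ℂ₊, the profile
`Q_v = (√(1-v²) Re B, −√(1-v²) Im B, −v)` has energy `E[Q_v] = (1-v²)·mπ`.
In particular (the case `v = 0`), every degree-`m` Blaschke product satisfies
`(1/4π) ∬ |B(x)-B(y)|²/(x-y)² dx dy = mπ`. -/
theorem energy_of_blaschke_profile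
    (v : ℝ) (hv : |v| < 1) (m : ℕ) (z : Fin m → ℂ) (hz : ∀ k, 0 < (z k).im) :
    (ENNReal.ofReal (1 / (4 * Real.pi)) *
        ∫⁻ x : ℝ, ∫⁻ y : ℝ,
          ENNReal.ofReal
            ((∑ i, (blaschkeProfile v z x i - blaschkeProfile v z y i) ^ 2) /
              (x - y) ^ 2)
      = ENNReal.ofReal ((1 - v ^ 2) * m * Real.pi)) ∧
    (ENNReal.ofReal (1 / (4 * Real.pi)) *
        ∫⁻ x : ℝ, ∫⁻ y : ℝ,
          ENNReal.ofReal
            (‖blaschke z (x : ℂ) - blaschke z (y : ℂ)‖ ^ 2 / (x - y) ^ 2)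
      = ENNReal.ofReal (m * Real.pi)) := by
  set ζ : ℕ → ℂ := fun n => if h : n < m then z ⟨n, h⟩ else Complex.I with hzeta
  have hζ : ∀ k, 0 < (ζ k).im := by
    intro k
    rw [hzeta]
    dsimp only
    split
    · exact hz _
    · simp
  have hBeq : ∀ w : ℂ, blaschke z w = ∏ k ∈ Finset.range m, bl ζ k w := by
    intro w
    rw [blaschke]
    calc (∏ i : Fin m, (w - z i) / (w - (starRingEnd ℂ) (z i)))
        = ∏ i : Fin m, bl ζ (i : ℕ) w := by
          refine Finset.prod_congr rfl fun i _ => ?_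
          rw [bl, hzeta]
          simp [i.isLt]
      _ = ∏ k ∈ Finset.range m, bl ζ k w := Fin.prod_univ_eq_prod_range (fun k => bl ζ k w) m
  -- inner integral identity
  have key2 : ∀ x : ℝ, (∫⁻ y : ℝ, ENNReal.ofReal
        (‖blaschke z (x : ℂ) - blaschke z (y : ℂ)‖ ^ 2 / (x - y) ^ 2))
      = ENNReal.ofReal (HH ζ m x) := by
    intro x
    have h0 : ∀ᵐ (y : ℝ), y ≠ x := by
      rw [ae_iff]
      simp only [ne_eq, not_not, Set.setOf_eq_eq_singleton]
      exact measure_singleton x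
    have hae : ∀ᵐ y : ℝ, ENNReal.ofReal
          (‖blaschke z (x : ℂ) - blaschke z (y : ℂ)‖ ^ 2 / (x - y) ^ 2)
        = ENNReal.ofReal (Complex.normSq (SS ζ m x y)) := by
      filter_upwards [h0] with y hy
      congr 1
      rw [hBeq, hBeq, blaschke_sub hζ]
      rw [norm_mul]
      have h1 : ‖(x : ℂ) - (y : ℂ)‖ = |x - y| := by
        rw [← Complex.ofReal_sub, Complex.norm_real, Real.norm_eq_abs]
      rw [h1, mul_pow, _root_.sq_abs, Complex.sq_norm]
      rw [mul_comm, mul_div_assoc, div_self (pow_ne_zero 2 (sub_ne_zero.2 (Ne.symm hy))),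
        mul_one]
    rw [lintegral_congr_ae hae,
      ← ofReal_integral_eq_lintegral_ofReal (integrable_normSq_SS hζ x)
        (ae_of_all _ fun y => Complex.normSq_nonneg _),
      integral_normSq_SS hζ x]
  have main2 : (∫⁻ x : ℝ, ∫⁻ y : ℝ, ENNReal.ofReal
        (‖blaschke z (x : ℂ) - blaschke z (y : ℂ)‖ ^ 2 / (x - y) ^ 2))
      = ENNReal.ofReal ((m : ℝ) * (4 * Real.pi ^ 2)) := by
    rw [lintegral_congr key2,
      ← ofReal_integral_eq_lintegral_ofReal (integrable_HH hζ)
        (ae_of_all _ fun x => HH_nonneg hζ x),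
      integral_HH hζ]
  have part2 : ENNReal.ofReal (1 / (4 * Real.pi)) *
      (∫⁻ x : ℝ, ∫⁻ y : ℝ, ENNReal.ofReal
        (‖blaschke z (x : ℂ) - blaschke z (y : ℂ)‖ ^ 2 / (x - y) ^ 2))
      = ENNReal.ofReal ((m : ℝ) * Real.pi) := by
    rw [main2, ← ENNReal.ofReal_mul (by positivity)]
    congr 1
    have hπ := Real.pi_ne_zero
    field_simp
  refine ⟨?_, part2⟩
  -- part 1
  have hv2 : (0:ℝ) ≤ 1 - v^2 := by
    have := (sq_lt_one_iff_abs_lt_one v).2 hv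
    linarith
  have hs : Real.sqrt (1 - v^2) ^ 2 = 1 - v^2 := Real.sq_sqrt hv2
  have hpt1 : ∀ x y : ℝ, (∑ i, (blaschkeProfile v z x i - blaschkeProfile v z y i) ^ 2)
      = (1 - v^2) * ‖blaschke z (x : ℂ) - blaschke z (y : ℂ)‖ ^ 2 := by
    intro x y
    rw [Fin.sum_univ_three]
    simp only [blaschkeProfile, Matrix.cons_val_zero, Matrix.cons_val_one, Matrix.head_cons,
      Matrix.cons_val_two, Matrix.tail_cons]
    rw [Complex.sq_norm, Complex.normSq_apply, Complex.sub_re, Complex.sub_im]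
    linear_combination ((blaschke z (x:ℂ)).re - (blaschke z (y:ℂ)).re)^2 * hs
      + ((blaschke z (x:ℂ)).im - (blaschke z (y:ℂ)).im)^2 * hs
  have congr1 : ∀ x y : ℝ, ENNReal.ofReal
        ((∑ i, (blaschkeProfile v z x i - blaschkeProfile v z y i) ^ 2) / (x - y) ^ 2)
      = ENNReal.ofReal (1 - v^2) * ENNReal.ofReal
          (‖blaschke z (x : ℂ) - blaschke z (y : ℂ)‖ ^ 2 / (x - y) ^ 2) := by
    intro x y
    rw [hpt1, mul_div_assoc, ENNReal.ofReal_mul hv2]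
  calc ENNReal.ofReal (1 / (4 * Real.pi)) *
        ∫⁻ x : ℝ, ∫⁻ y : ℝ, ENNReal.ofReal
          ((∑ i, (blaschkeProfile v z x i - blaschkeProfile v z y i) ^ 2) / (x - y) ^ 2)
      = ENNReal.ofReal (1 / (4 * Real.pi)) *
        ∫⁻ x : ℝ, ENNReal.ofReal (1 - v^2) * ∫⁻ y : ℝ, ENNReal.ofReal
          (‖blaschke z (x : ℂ) - blaschke z (y : ℂ)‖ ^ 2 / (x - y) ^ 2) := by
        rw [lintegral_congr fun x => ?_]
        rw [lintegral_congr fun y => congr1 x y]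
        exact lintegral_const_mul' _ _ ENNReal.ofReal_ne_top
    _ = ENNReal.ofReal (1 - v^2) * (ENNReal.ofReal (1 / (4 * Real.pi)) *
        ∫⁻ x : ℝ, ∫⁻ y : ℝ, ENNReal.ofReal
          (‖blaschke z (x : ℂ) - blaschke z (y : ℂ)‖ ^ 2 / (x - y) ^ 2)) := by
        rw [lintegral_const_mul' _ _ ENNReal.ofReal_ne_top]
        ring
    _ = ENNReal.ofReal (1 - v^2) * ENNReal.ofReal ((m : ℝ) * Real.pi) := by rw [part2]
    _ = ENNReal.ofReal ((1 - v ^ 2) * m * Real.pi) := by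
        rw [← ENNReal.ofReal_mul hv2]
        ring_nf
end
end

section
/- The map Q : ℝ → S² given by Q(x) = ((x² − 1)/(x² + 1), 2x/(x² + 1), 0) satisfies |∇|Q(x) = (2/(1 + x²)) Q(x) for all x ∈ ℝ, where |∇| is applied componentwise; consequently Q × |∇|Q = 0, i.e. Q is a (nonconstant, finite-energy) half-harmonic map from ℝ to S². -/
/-!
The degree-one half-harmonic map `Q(x) = ((x²-1)/(x²+1), 2x/(x²+1), 0)` satisfies
`|∇|Q = (2/(1+x²)) Q`, hence `Q × |∇|Q = 0`.
-/

open MeasureTheory Filter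
open scoped ENNReal Topology

noncomputable section

/-- Cross product on ℝ³. -/
def cross3 (a b : V3) : V3 := crossProduct a b

/-- `HasHalfLap u g` means that `g = |∇|u` pointwise, where `|∇|` (the Fourier
multiplier with symbol `|ξ|`) is realized as the principal-value singular integral
`|∇|u(x) = (1/π) p.v. ∫ (u(x)-u(y))/(x-y)² dy`. -/
def HasHalfLap {E : Type*} [NormedAddCommGroup E] [NormedSpace ℝ E]
    (u g : ℝ → E) : Prop :=
  ∀ x : ℝ, Filter.Tendsto
    (fun ε : ℝ =>
      (Real.pi)⁻¹ • ∫ y in {y : ℝ | ε ≤ |x - y|}, ((x - y) ^ 2)⁻¹ • (u x - u y))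
    (nhdsWithin 0 (Set.Ioi 0)) (nhds (g x))

/-- The ground-state profile `Q(x) = ((x²-1)/(x²+1), 2x/(x²+1), 0)`, a rational
parametrization of the equator of 𝕊². -/
def groundState (x : ℝ) : V3 :=
  ![(x ^ 2 - 1) / (x ^ 2 + 1), 2 * x / (x ^ 2 + 1), 0]

namespace HalfHarmonicAux

open Set Real

lemma inv_atBot : Tendsto (fun y : ℝ => y⁻¹) atBot (𝓝 0) := by
  have h : Tendsto (fun y : ℝ => (-y)⁻¹) atBot (𝓝 0) :=
    tendsto_inv_atTop_zero.comp tendsto_neg_atBot_atTop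
  have h2 := h.neg
  simp only [inv_neg, neg_neg, neg_zero] at h2
  exact h2

lemma ratio_lim (x : ℝ) (l : Filter ℝ) (h0 : Tendsto (fun y : ℝ => y⁻¹) l (𝓝 0))
    (hne : ∀ᶠ y in l, y ≠ 0) :
    Tendsto (fun y => (1 + y^2)/(x - y)^2) l (𝓝 1) := by
  have key : Tendsto (fun y : ℝ => ((y⁻¹)^2 + 1)/((x * y⁻¹ - 1)^2)) l
      (𝓝 (((0:ℝ)^2 + 1)/((x * 0 - 1)^2))) := by
    apply Tendsto.div
    · exact (h0.pow 2).add tendsto_const_nhds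
    · exact ((h0.const_mul x).sub tendsto_const_nhds).pow 2
    · norm_num
  have heq : (((0:ℝ)^2 + 1)/((x * 0 - 1)^2)) = 1 := by norm_num
  rw [heq] at key
  apply key.congr'
  filter_upwards [hne] with y hy
  rcases eq_or_ne y x with h | hxy
  · have h1 : x - y = 0 := by rw [h]; ring
    have h2 : x * y⁻¹ - 1 = 0 := by rw [← h]; field_simp; norm_num
    simp [h1, h2]
  · have hxy' : x - y ≠ 0 := sub_ne_zero.mpr (Ne.symm hxy)
    field_simp

variable (x α β A C : ℝ)

lemma F_deriv (hA : A = (α + β*x)/(1+x^2)) (hC : C = A*x - β) (y : ℝ) (hy : y ≠ x) :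
    HasDerivAt (fun y => -A * Real.log (x - y) + A/2 * Real.log (1+y^2) + C * Real.arctan y)
      ((α + β*y)/((x - y)*(1+y^2))) y := by
  have hxy : x - y ≠ 0 := sub_ne_zero.mpr (Ne.symm hy)
  have h1y : (1:ℝ) + y^2 ≠ 0 := by positivity
  have hx2 : (1:ℝ) + x^2 ≠ 0 := by positivity
  have d1 : HasDerivAt (fun y : ℝ => Real.log (x - y)) ((x - y)⁻¹ * (-1)) y :=
    (Real.hasDerivAt_log hxy).comp y ((hasDerivAt_id y).const_sub x)
  have d2 : HasDerivAt (fun y : ℝ => Real.log (1 + y^2)) ((1+y^2)⁻¹ * (2*y)) y := by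
    have hin : HasDerivAt (fun y : ℝ => 1 + y^2) (2*y) y := by
      simpa using (hasDerivAt_pow 2 y).const_add 1
    exact (Real.hasDerivAt_log h1y).comp y hin
  have d3 := Real.hasDerivAt_arctan y
  have D := ((d1.const_mul (-A)).add (d2.const_mul (A/2))).add (d3.const_mul C)
  refine D.congr_deriv ?_
  subst hA hC
  field_simp
  ring

lemma F_top (hA : A = (α + β*x)/(1+x^2)) (hC : C = A*x - β) :
    Tendsto (fun y => -A * Real.log (x - y) + A/2 * Real.log (1+y^2) + C * Real.arctan y)
      atTop (𝓝 (C * (π/2))) := by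
  have h1 : Tendsto (fun y : ℝ => Real.log ((1+y^2)/(x-y)^2)) atTop (𝓝 0) := by
    have := (Real.continuousAt_log one_ne_zero).tendsto.comp
      (ratio_lim x atTop tendsto_inv_atTop_zero (eventually_ne_atTop 0))
    simpa [Function.comp_def, Real.log_one] using this
  have h2 : Tendsto (fun y : ℝ => C * Real.arctan y) atTop (𝓝 (C * (π/2))) :=
    (Real.tendsto_arctan_atTop.mono_right nhdsWithin_le_nhds).const_mul C
  have h3 := (h1.const_mul (A/2)).add h2
  rw [mul_zero, zero_add] at h3
  apply h3.congr'
  filter_upwards [eventually_ne_atTop x] with y hy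
  have hxy : x - y ≠ 0 := sub_ne_zero.mpr (Ne.symm hy)
  have h1y : (1:ℝ) + y^2 ≠ 0 := by positivity
  rw [Real.log_div h1y (pow_ne_zero 2 hxy), Real.log_pow]
  push_cast
  ring

lemma F_bot (hA : A = (α + β*x)/(1+x^2)) (hC : C = A*x - β) :
    Tendsto (fun y => -A * Real.log (x - y) + A/2 * Real.log (1+y^2) + C * Real.arctan y)
      atBot (𝓝 (C * (-(π/2)))) := by
  have h1 : Tendsto (fun y : ℝ => Real.log ((1+y^2)/(x-y)^2)) atBot (𝓝 0) := by
    have := (Real.continuousAt_log one_ne_zero).tendsto.comp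
      (ratio_lim x atBot inv_atBot (eventually_ne_atBot 0))
    simpa [Function.comp_def, Real.log_one] using this
  have h2 : Tendsto (fun y : ℝ => C * Real.arctan y) atBot (𝓝 (C * (-(π/2)))) :=
    (Real.tendsto_arctan_atBot.mono_right nhdsWithin_le_nhds).const_mul C
  have h3 := (h1.const_mul (A/2)).add h2
  rw [mul_zero, zero_add] at h3
  apply h3.congr'
  filter_upwards [eventually_ne_atBot x] with y hy
  have hxy : x - y ≠ 0 := sub_ne_zero.mpr (Ne.symm hy)
  have h1y : (1:ℝ) + y^2 ≠ 0 := by positivity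
  rw [Real.log_div h1y (pow_ne_zero 2 hxy), Real.log_pow]
  push_cast
  ring

lemma S_meas (ε : ℝ) : MeasurableSet {y : ℝ | ε ≤ |x - y|} :=
  measurableSet_le measurable_const (by fun_prop)

lemma S_eq (ε : ℝ) : {y : ℝ | ε ≤ |x - y|} = Iic (x - ε) ∪ Ici (x + ε) := by
  ext y
  simp only [mem_setOf_eq, mem_union, mem_Iic, mem_Ici, le_abs]
  constructor
  · rintro (h | h)
    · left; linarith
    · right; linarith
  · rintro (h | h)
    · left; linarith
    · right; linarith

lemma g_int {ε : ℝ} (hε : 0 < ε) :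
    IntegrableOn (fun y => (α + β*y)/((x - y)*(1+y^2))) {y : ℝ | ε ≤ |x - y|} := by
  apply Integrable.mono' ((integrable_inv_one_add_sq.const_mul (|α + β*x|/ε + |β|)).restrict)
  · apply Measurable.aestronglyMeasurable
    apply Measurable.div (by fun_prop) (by fun_prop)
  · rw [ae_restrict_iff' (S_meas x ε)]
    refine ae_of_all _ fun y hy => ?_
    have hy' : ε ≤ |x - y| := hy
    have h2 : (0:ℝ) < 1 + y^2 := by positivity
    have h3 : (0:ℝ) < |x - y| := lt_of_lt_of_le hε hy'
    have key : |α + β*y| ≤ (|α + β*x|/ε + |β|) * |x - y| := by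
      have hre : α + β*y = (α + β*x) - β*(x - y) := by ring
      calc |α + β*y| ≤ |α + β*x| + |β| * |x - y| := by
            rw [hre]
            exact (abs_sub _ _).trans (le_of_eq (by rw [abs_mul]))
        _ ≤ (|α + β*x|/ε) * |x - y| + |β| * |x - y| := by
            have h4 : |α + β*x| = (|α + β*x|/ε) * ε := by field_simp
            have h5 : (0:ℝ) ≤ |α + β*x|/ε := by positivity
            nlinarith
        _ = (|α + β*x|/ε + |β|) * |x - y| := by ring
    rw [Real.norm_eq_abs, abs_div, abs_mul, abs_of_pos h2]
    calc |α + β*y| / (|x - y| * (1 + y^2))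
        ≤ ((|α + β*x|/ε + |β|) * |x - y|) / (|x - y| * (1 + y^2)) := by gcongr
      _ = (|α + β*x|/ε + |β|) * (1 + y^2)⁻¹ := by
          field_simp

lemma g_integral (hA : A = (α + β*x)/(1+x^2)) (hC : C = A*x - β) {ε : ℝ} (hε : 0 < ε) :
    ∫ y in {y : ℝ | ε ≤ |x - y|}, (α + β*y)/((x - y)*(1+y^2))
      = π * C + (A/2 * (Real.log (1+(x-ε)^2) - Real.log (1+(x+ε)^2))
          + C * (Real.arctan (x-ε) - Real.arctan (x+ε))) := by
  have hint := g_int x α β hε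
  rw [S_eq] at hint ⊢
  have hint1 : IntegrableOn (fun y => (α + β*y)/((x - y)*(1+y^2))) (Iic (x-ε)) :=
    hint.mono_set subset_union_left
  have hint2 : IntegrableOn (fun y => (α + β*y)/((x - y)*(1+y^2))) (Ici (x+ε)) :=
    hint.mono_set subset_union_right
  have hdisj : Disjoint (Iic (x-ε)) (Ici (x+ε)) := by
    rw [Set.disjoint_left]
    intro y h1 h2
    simp only [mem_Iic, mem_Ici] at h1 h2
    linarith
  rw [setIntegral_union hdisj measurableSet_Ici hint1 hint2, integral_Ici_eq_integral_Ioi]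
  rw [integral_Iic_of_hasDerivAt_of_tendsto'
      (fun y hy => F_deriv x α β A C hA hC y
        (by simp only [mem_Iic] at hy; intro h; rw [h] at hy; linarith))
      hint1 (F_bot x α β A C hA hC)]
  rw [integral_Ioi_of_hasDerivAt_of_tendsto'
      (fun y hy => F_deriv x α β A C hA hC y
        (by simp only [mem_Ici] at hy; intro h; rw [h] at hy; linarith))
      (hint2.mono_set Ioi_subset_Ici_self) (F_top x α β A C hA hC)]
  have e1 : x - (x - ε) = ε := by ring
  have e2 : x - (x + ε) = -ε := by ring
  rw [e1, e2, Real.log_neg_eq_log]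
  ring

lemma scalar_tendsto :
    Tendsto (fun ε => ∫ y in {y : ℝ | ε ≤ |x - y|}, (α + β*y)/((x - y)*(1+y^2)))
      (𝓝[>] (0:ℝ))
      (𝓝 (π * (((α + β*x)/(1+x^2))*x - β))) := by
  set A := (α + β*x)/(1+x^2) with hA
  set C := A*x - β with hC
  have hΦc : ContinuousAt (fun ε : ℝ => π * C + (A/2 * (Real.log (1+(x-ε)^2) - Real.log (1+(x+ε)^2))
          + C * (Real.arctan (x-ε) - Real.arctan (x+ε)))) 0 := by
    apply ContinuousAt.add continuousAt_const
    apply ContinuousAt.add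
    · apply ContinuousAt.mul continuousAt_const
      apply ContinuousAt.sub
      · exact (Real.continuousAt_log (by positivity)).comp (by fun_prop)
      · exact (Real.continuousAt_log (by positivity)).comp (by fun_prop)
    · apply ContinuousAt.mul continuousAt_const
      apply ContinuousAt.sub
      · exact Real.continuous_arctan.continuousAt.comp (by fun_prop)
      · exact Real.continuous_arctan.continuousAt.comp (by fun_prop)
  have hΦ := hΦc.tendsto
  have hval : π * C + (A/2 * (Real.log (1+(x-0)^2) - Real.log (1+(x+0)^2))
          + C * (Real.arctan (x-0) - Real.arctan (x+0))) = π * C := by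
    norm_num
  rw [hval] at hΦ
  apply (hΦ.mono_left nhdsWithin_le_nhds).congr'
  filter_upwards [self_mem_nhdsWithin] with ε (hε : ε ∈ Ioi 0)
  exact (g_integral x α β A C hA hC hε).symm

end HalfHarmonicAux

open HalfHarmonicAux Set Real in
/-- **The ground state is a half-harmonic map**: the map
`Q(x) = ((x²-1)/(x²+1), 2x/(x²+1), 0)` takes values in 𝕊², satisfies
`|∇|Q(x) = (2/(1+x²)) Q(x)` for all `x`, hence `Q × |∇|Q = 0`; it is nonconstant
and has finite energy. -/
theorem groundState_half_harmonic :
    (∀ x : ℝ, ∑ i, (groundState x i) ^ 2 = 1) ∧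
    HasHalfLap groundState (fun x => (2 / (1 + x ^ 2)) • groundState x) ∧
    (∀ x : ℝ, cross3 (groundState x) ((2 / (1 + x ^ 2)) • groundState x) = 0) ∧
    (∃ x y : ℝ, groundState x ≠ groundState y) ∧
    (∫⁻ x : ℝ, ∫⁻ y : ℝ,
        ENNReal.ofReal
          ((∑ i, (groundState x i - groundState y i) ^ 2) / (x - y) ^ 2)) < ⊤ := by
  refine ⟨?_, ?_, ?_, ?_, ?_⟩
  · -- sphere
    intro x
    have h : x^2 + 1 ≠ 0 := by positivity
    simp only [groundState, Fin.sum_univ_three, Matrix.cons_val_zero, Matrix.cons_val_one,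
      Matrix.head_cons, Matrix.cons_val_two, Matrix.tail_cons]
    field_simp
    ring
  · -- half-Laplacian
    intro x
    have hx2 : (0:ℝ) < 1 + x^2 := by positivity
    set c : ℝ := 2/(1+x^2) with hc
    set e0 : V3 := ![1,0,0] with he0
    set e1 : V3 := ![0,1,0] with he1
    have h1 := scalar_tendsto x x 1
    have h2 := scalar_tendsto x 1 (-x)
    have hT := (((h1.const_mul c).smul_const e0).add ((h2.const_mul c).smul_const e1)).const_smul
      (π⁻¹ : ℝ)
    have hlim : (π⁻¹ : ℝ) • ((c * (π * (((x + 1*x)/(1+x^2))*x - 1))) • e0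
        + (c * (π * (((1 + (-x)*x)/(1+x^2))*x - (-x)))) • e1) = (2 / (1 + x ^ 2)) • groundState x := by
      funext i
      fin_cases i <;>
        simp only [groundState, he0, he1, hc, Pi.smul_apply, Pi.add_apply, smul_eq_mul,
          Matrix.cons_val_zero, Matrix.cons_val_one, Matrix.head_cons, Matrix.cons_val_two,
          Matrix.tail_cons, Fin.isValue, Fin.zero_eta, Fin.mk_one, Fin.reduceFinMk] <;>
        field_simp <;> ring
    rw [hlim] at hT
    apply hT.congr'
    filter_upwards [self_mem_nhdsWithin] with ε (hε : ε ∈ Ioi 0)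
    have hε' : 0 < ε := hε
    have hg1 := g_int x x 1 hε'
    have hg2 := g_int x 1 (-x) hε'
    have heqon : EqOn (fun y => ((x - y) ^ 2)⁻¹ • (groundState x - groundState y))
        (fun y => (c * ((x + 1*y)/((x - y)*(1+y^2)))) • e0
          + (c * ((1 + (-x)*y)/((x - y)*(1+y^2)))) • e1) {y : ℝ | ε ≤ |x - y|} := by
      intro y hy
      have hxy : x - y ≠ 0 := by
        intro h
        have : ε ≤ |x - y| := hy
        rw [h] at this
        simp at this
        linarith
      have h1y : (1:ℝ) + y^2 ≠ 0 := by positivity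
      have hx2' : (1:ℝ) + x^2 ≠ 0 := by positivity
      have hX : x^2 + 1 ≠ 0 := by positivity
      have hY : y^2 + 1 ≠ 0 := by positivity
      funext i
      fin_cases i <;>
        simp only [groundState, he0, he1, hc, Pi.smul_apply, Pi.add_apply, Pi.sub_apply,
          smul_eq_mul, Matrix.cons_val_zero, Matrix.cons_val_one, Matrix.head_cons,
          Matrix.cons_val_two, Matrix.tail_cons, Fin.isValue, Fin.zero_eta, Fin.mk_one, Fin.reduceFinMk] <;>
        field_simp <;> ring
    rw [setIntegral_congr_fun (S_meas x ε) heqon]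
    rw [integral_add ((hg1.const_mul c).smul_const e0) ((hg2.const_mul c).smul_const e1)]
    rw [integral_smul_const, integral_smul_const, integral_const_mul, integral_const_mul]
  · -- cross product
    intro x
    show crossProduct (groundState x) ((2 / (1 + x ^ 2)) • groundState x) = 0
    rw [LinearMap.map_smul, cross_self, smul_zero]
  · -- nonconstant
    refine ⟨0, 1, fun h => ?_⟩
    have h0 := congrFun h 0
    simp only [groundState, Matrix.cons_val_zero] at h0
    norm_num at h0
  · -- finite energy
    have bound : ∀ x y : ℝ,
        ENNReal.ofReal ((∑ i, (groundState x i - groundState y i) ^ 2) / (x - y) ^ 2)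
          ≤ ENNReal.ofReal (4/(1+x^2) * (1/(1+y^2))) := by
      intro x y
      apply ENNReal.ofReal_le_ofReal
      rcases eq_or_ne x y with rfl | hxy
      · simp only [sub_self, zero_pow, ne_eq, OfNat.ofNat_ne_zero, not_false_eq_true,
          Finset.sum_const_zero, zero_div]
        positivity
      · have hxy' : x - y ≠ 0 := sub_ne_zero.mpr hxy
        have hX : x^2 + 1 ≠ 0 := by positivity
        have hY : y^2 + 1 ≠ 0 := by positivity
        have hX' : (1:ℝ) + x^2 ≠ 0 := by positivity
        have hY' : (1:ℝ) + y^2 ≠ 0 := by positivity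
        apply le_of_eq
        simp only [groundState, Fin.sum_univ_three, Matrix.cons_val_zero, Matrix.cons_val_one,
          Matrix.head_cons, Matrix.cons_val_two, Matrix.tail_cons]
        field_simp
        ring
    have hK : (∫⁻ y : ℝ, ENNReal.ofReal (1/(1+y^2))) < ⊤ := by
      have : Integrable (fun y : ℝ => 1/(1+y^2)) := by
        simpa [one_div] using integrable_inv_one_add_sq
      exact this.lintegral_lt_top
    have h4 : (∫⁻ x : ℝ, ENNReal.ofReal (4/(1+x^2))) < ⊤ := by
      have : Integrable (fun x : ℝ => 4/(1+x^2)) := by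
        simpa [div_eq_mul_inv] using integrable_inv_one_add_sq.const_mul 4
      exact this.lintegral_lt_top
    calc ∫⁻ x : ℝ, ∫⁻ y : ℝ, ENNReal.ofReal
            ((∑ i, (groundState x i - groundState y i) ^ 2) / (x - y) ^ 2)
        ≤ ∫⁻ x : ℝ, ∫⁻ y : ℝ, ENNReal.ofReal (4/(1+x^2) * (1/(1+y^2))) :=
          lintegral_mono fun x => lintegral_mono fun y => bound x y
      _ = (∫⁻ x : ℝ, ENNReal.ofReal (4/(1+x^2))) * (∫⁻ y : ℝ, ENNReal.ofReal (1/(1+y^2))) := by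
          have inner : ∀ x : ℝ, (∫⁻ y : ℝ, ENNReal.ofReal (4/(1+x^2) * (1/(1+y^2))))
              = ENNReal.ofReal (4/(1+x^2)) * ∫⁻ y : ℝ, ENNReal.ofReal (1/(1+y^2)) := by
            intro x
            have hpos : (0:ℝ) ≤ 4/(1+x^2) := by positivity
            simp_rw [ENNReal.ofReal_mul hpos]
            exact lintegral_const_mul' _ _ ENNReal.ofReal_ne_top
          simp_rw [inner]
          exact lintegral_mul_const' _ _ hK.ne
      _ < ⊤ := ENNReal.mul_lt_top h4 hK
end
end
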